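/- Let I be a strongly stable monomial ideal in S = K[x_1,...,x_n]. Then |M_i(I,j)| ≥ |M_{≤i}(I,j-1)| for all 1 ≤ i ≤ n and j > 0. Moreover, if β_{i,i+j}(I) = 0, then |M_{i+1}(I,j)| = |M_{≤i+1}(I,j-1)|. -/

import Mathlib

set_option synthInstance.maxHeartbeats 1000000
set_option maxHeartbeats 1000000

open MvPolynomial

namespace Paper

/-! ### Combinatorics of monomials -/

/-- a monomial in `n` variables, encoded by its exponent vector -/
abbrev Mono (n : ℕ) := Fin n →₀ ℕ

/-- total degree of a monomial -/
def mdeg {n : ℕ} (u : Mono n) : ℕ := u.sum fun _ e => e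

/-- `maxVar u` is the largest index (1-indexed) of a variable dividing `u`; `maxVar 1 = 0`. -/
def maxVar {n : ℕ} (u : Mono n) : ℕ := u.support.sup fun i => (i : ℕ) + 1

/-- `LexGT u v` : `u >_lex v` (lexicographic order with `x_1 > x_2 > ⋯ > x_n`). -/
def LexGT {n : ℕ} (u v : Mono n) : Prop :=
  ∃ i : Fin n, v i < u i ∧ ∀ j : Fin n, j < i → u j = v j

/-- strongly stable set of monomials -/
def SStableSet {n : ℕ} (V : Set (Mono n)) : Prop :=
  ∀ u : Mono n, ∀ p q : Fin n, p < q → u + Finsupp.single q 1 ∈ V →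
    u + Finsupp.single p 1 ∈ V

/-- `Dk V k = { u / x_k : u ∈ V, max(u) = k }` (here `k : Fin n` is the 0-indexed variable,
corresponding to the 1-indexed variable `k+1`) -/
def Dk {n : ℕ} (V : Set (Mono n)) (k : Fin n) : Set (Mono n) :=
  {w | w + Finsupp.single k 1 ∈ V ∧ maxVar (w + Finsupp.single k 1) = (k : ℕ) + 1}

/-- `Mle j W = { u ∈ W : max(u) ≤ j }` -/
def Mle {n : ℕ} (j : ℕ) (W : Set (Mono n)) : Set (Mono n) := {u ∈ W | maxVar u ≤ j}

/-- `L` is a lexsegment set of monomials inside `K[x_1,…,x_k]`. -/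
def LexSegIn {n : ℕ} (k : ℕ) (L : Set (Mono n)) : Prop :=
  (∀ u ∈ L, maxVar u ≤ k) ∧
  ∀ u ∈ L, ∀ v : Mono n, mdeg v = mdeg u → maxVar v ≤ k → LexGT v u → v ∈ L

/-- `V` is a `d`-linear lexsegment set of monomials of degree `d`. -/
def DLinearLexSeg {n : ℕ} (d : ℕ) (V : Set (Mono n)) : Prop :=
  (∀ u ∈ V, mdeg u = d) ∧ SStableSet V ∧
    ∀ k : Fin n, LexSegIn ((k : ℕ) + 1) (Dk V k)

/-! ### Ideal-level notions -/

variable {n : ℕ} {K : Type} [Field K]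

/-- `I` is a monomial ideal. -/
def MonomialIdeal (I : Ideal (MvPolynomial (Fin n) K)) : Prop :=
  ∀ p ∈ I, ∀ m ∈ p.support, (monomial m (1 : K)) ∈ I

/-- `u` is a minimal monomial generator of the monomial ideal `I`. -/
def MinGen (I : Ideal (MvPolynomial (Fin n) K)) (u : Mono n) : Prop :=
  monomial u (1 : K) ∈ I ∧ ∀ v : Mono n, v ≤ u → v ≠ u → monomial v (1 : K) ∉ I

/-- stable monomial ideal -/
def StableIdeal (I : Ideal (MvPolynomial (Fin n) K)) : Prop :=
  MonomialIdeal I ∧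
  ∀ u : Mono n, ∀ q : Fin n, maxVar u = (q : ℕ) + 1 → monomial u (1 : K) ∈ I →
    ∀ p : Fin n, p < q →
      monomial (u - Finsupp.single q 1 + Finsupp.single p 1) (1 : K) ∈ I

/-- strongly stable monomial ideal -/
def SStableIdeal (I : Ideal (MvPolynomial (Fin n) K)) : Prop :=
  MonomialIdeal I ∧
  ∀ u : Mono n, ∀ q : Fin n, 0 < u q → monomial u (1 : K) ∈ I →
    ∀ p : Fin n, p < q →
      monomial (u - Finsupp.single q 1 + Finsupp.single p 1) (1 : K) ∈ I

/-- the set of (exponent vectors of) monomials of degree `k` lying in `I` -/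
def monSlice (I : Ideal (MvPolynomial (Fin n) K)) (k : ℕ) : Set (Mono n) :=
  {u | mdeg u = k ∧ monomial u (1 : K) ∈ I}

/-- homogeneous (graded) ideal -/
def HomIdeal (I : Ideal (MvPolynomial (Fin n) K)) : Prop :=
  ∀ p ∈ I, ∀ k : ℕ, homogeneousComponent k p ∈ I

/-! ### Graded components and Hilbert functions -/

/-- the degree-`z` homogeneous component of `I`, as a `K`-subspace -/
noncomputable def hComp (I : Ideal (MvPolynomial (Fin n) K)) (z : ℤ) :
    Submodule K (MvPolynomial (Fin n) K) :=
  if 0 ≤ z then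
    (Submodule.restrictScalars K I) ⊓ homogeneousSubmodule (Fin n) K z.toNat
  else ⊥

/-- Hilbert function `H(I,t)` of the ideal `I` -/
noncomputable def hfI (I : Ideal (MvPolynomial (Fin n) K)) (t : ℕ) : ℕ :=
  Module.finrank K (hComp I (t : ℤ))

/-- Hilbert function `H(S/I,t)` of the quotient `S/I` -/
noncomputable def hfQ (I : Ideal (MvPolynomial (Fin n) K)) (t : ℕ) : ℕ :=
  Module.finrank K
    (homogeneousSubmodule (Fin n) K t ⧸
      Submodule.comap (homogeneousSubmodule (Fin n) K t).subtype
        (Submodule.restrictScalars K I))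

/-! ### Graded Betti numbers via the Koszul complex, and regularity -/

lemma mulX_mem (I : Ideal (MvPolynomial (Fin n) K)) (k : Fin n) (z : ℤ)
    {p : MvPolynomial (Fin n) K} (hp : p ∈ hComp I z) : X k * p ∈ hComp I (z + 1) := by
  unfold hComp at *
  by_cases h : 0 ≤ z
  · simp only [if_pos h] at hp
    have h1 : (0:ℤ) ≤ z + 1 := by omega
    simp only [if_pos h1]
    refine ⟨Ideal.mul_mem_left _ _ hp.1, ?_⟩
    have h2 : p.IsHomogeneous z.toNat := (mem_homogeneousSubmodule _ _).1 hp.2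
    have h3 := (isHomogeneous_X K k).mul h2
    have hz : (z + 1).toNat = 1 + z.toNat := by omega
    exact (mem_homogeneousSubmodule _ _).2 (hz ▸ h3)
  · simp only [if_neg h] at hp
    simp only [Submodule.mem_bot] at hp
    subst hp
    simp

/-- multiplication by `X k` as a linear map between graded components of `I` -/
noncomputable def kosMulX (I : Ideal (MvPolynomial (Fin n) K)) (k : Fin n) (z : ℤ) :
    hComp I z →ₗ[K] hComp I (z + 1) :=
  LinearMap.codRestrict _ ((LinearMap.mulLeft K (X k)).comp (hComp I z).subtype)
    fun p => mulX_mem I k z p.2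

/-- transport along an equality of degrees -/
noncomputable def hCompCast (I : Ideal (MvPolynomial (Fin n) K)) {z z' : ℤ} (h : z = z') :
    hComp I z →ₗ[K] hComp I z' :=
  Submodule.inclusion (le_of_eq (by rw [h]))

/-- the degree-`j` strand of the Koszul differential
`I ⊗ Λ^{i+1} K^n → I ⊗ Λ^i K^n` of `I` (tensored over `S` with the Koszul complex on
`x_1,…,x_n`), whose homology computes `Tor_•(I, K)` with its internal grading. -/
noncomputable def kosD (I : Ideal (MvPolynomial (Fin n) K)) (i : ℕ) (j : ℤ) :
    ({T : Finset (Fin n) // T.card = i + 1} → hComp I (j - (i + 1))) →ₗ[K]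
    ({T : Finset (Fin n) // T.card = i} → hComp I (j - i)) :=
  LinearMap.pi fun T =>
    ∑ k ∈ ((T : Finset (Fin n))ᶜ).attach,
      ((-1 : K) ^ (((T : Finset (Fin n)).filter fun a => a < (k : Fin n)).card)) •
        ((hCompCast I (by omega) :
            hComp I (j - ((i : ℤ) + 1) + 1) →ₗ[K] hComp I (j - i)) ∘ₗ
          (kosMulX I k (j - ((i : ℤ) + 1))) ∘ₗ
          (LinearMap.proj (⟨insert (k : Fin n) (T : Finset (Fin n)), by
              rw [Finset.card_insert_of_notMem (Finset.mem_compl.mp k.2), T.2]⟩ :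
            {T : Finset (Fin n) // T.card = i + 1})))

/-- the cycles of the Koszul complex of `I` at homological position `i`, internal degree `j` -/
noncomputable def bettiKer (I : Ideal (MvPolynomial (Fin n) K)) (i : ℕ) (j : ℤ) :
    Submodule K ({T : Finset (Fin n) // T.card = i} → hComp I (j - i)) :=
  match i with
  | 0 => ⊤
  | i' + 1 => LinearMap.ker (kosD I i' j)

/-- the graded Betti number `β_{ij}(I) = dim_K Tor_i(I,K)_j`, computed as the dimension of
the homology of the degree-`j` strand of the Koszul complex:
`dim ker - dim (im ⊓ ker)`. -/
noncomputable def betti (I : Ideal (MvPolynomial (Fin n) K)) (i : ℕ) (j : ℤ) : ℕ :=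
  Module.finrank K (bettiKer I i j) -
    Module.finrank K (LinearMap.range (kosD I i j) ⊓ bettiKer I i j :
      Submodule K ({T : Finset (Fin n) // T.card = i} → hComp I (j - i)))

/-- Castelnuovo–Mumford regularity `reg(I) = max{k : β_{i,i+k}(I) ≠ 0 for some i}` -/
noncomputable def reg (I : Ideal (MvPolynomial (Fin n) K)) : ℤ :=
  sSup {k : ℤ | ∃ i : ℕ, betti I i ((i : ℤ) + k) ≠ 0}

/-- `M_i(I,j)`: monomials of degree `j` in `I` with `max(u) = i` (1-indexed `i`) -/
def Mset (I : Ideal (MvPolynomial (Fin n) K)) (i j : ℕ) : Set (Mono n) :=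
  {u | mdeg u = j ∧ monomial u (1 : K) ∈ I ∧ maxVar u = i}

/-- `M_{≤i}(I,j)`: monomials of degree `j` in `I` with `max(u) ≤ i` -/
def MleSet (I : Ideal (MvPolynomial (Fin n) K)) (i j : ℕ) : Set (Mono n) :=
  {u | mdeg u = j ∧ monomial u (1 : K) ∈ I ∧ maxVar u ≤ i}

/-! The map `u ↦ u·x_i` injects `M_{≤i}(I, j-1)` into `M_i(I, j)`. It is onto `M_{i+1}(I, j)`
as soon as no element of `M_{i+1}(I, j)` is a minimal generator, because in a strongly stable
ideal a monomial that is not a minimal generator stays in `I` after division by its last variable.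
And a minimal generator `u` of degree `j` with `max(u) = i+1` makes `β_{i,i+j}(I)` nonzero: the
Koszul boundary of `(u/x_{i+1}) ⊗ e_{1,…,i+1}`, taken over `S`, has all its coordinates
`± u x_l / x_{i+1}` in `I`, hence is a cycle of the Koszul complex of `I`; its coordinate at
`e_{1,…,i}` contains `u`, which no boundary of `I` can contain since `u/x_l ∉ I` for every `l`. -/

open Finset

section Monomials

lemma mdeg_add (u v : Mono n) : mdeg (u + v) = mdeg u + mdeg v :=
  map_add Finsupp.degree u v

lemma mdeg_single (k : Fin n) : mdeg (Finsupp.single k 1) = 1 :=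
  Finsupp.degree_single k 1

lemma sub_single_add_single {u : Mono n} {k : Fin n} (h : u k ≠ 0) :
    u - Finsupp.single k 1 + Finsupp.single k 1 = u :=
  tsub_add_cancel_of_le (Finsupp.single_le_iff.mpr (Nat.one_le_iff_ne_zero.mpr h))

lemma mdeg_sub_single_add_one {u : Mono n} {k : Fin n} (h : u k ≠ 0) :
    mdeg (u - Finsupp.single k 1) + 1 = mdeg u := by
  conv_rhs => rw [← sub_single_add_single h]
  rw [mdeg_add, mdeg_single]

lemma finite_setOf_mdeg_eq (j : ℕ) : {u : Mono n | mdeg u = j}.Finite :=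
  Finsupp.finite_of_degree_eq j

lemma maxVar_le_iff {u : Mono n} {m : ℕ} :
    maxVar u ≤ m ↔ ∀ i : Fin n, u i ≠ 0 → (i : ℕ) + 1 ≤ m := by
  simp only [maxVar, Finset.sup_le_iff, Finsupp.mem_support_iff]

lemma le_maxVar {u : Mono n} {i : Fin n} (h : u i ≠ 0) : (i : ℕ) + 1 ≤ maxVar u :=
  Finset.le_sup (f := fun i : Fin n => (i : ℕ) + 1) (Finsupp.mem_support_iff.mpr h)

lemma maxVar_add_single (u : Mono n) (k : Fin n) :
    maxVar (u + Finsupp.single k 1) = max (maxVar u) ((k : ℕ) + 1) := by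
  refine le_antisymm (maxVar_le_iff.mpr fun i hi => ?_) (max_le ?_ (le_maxVar (by simp)))
  · by_cases hik : i = k
    · exact hik ▸ le_max_right _ _
    · simp only [Finsupp.add_apply, Finsupp.single_eq_of_ne hik, add_zero] at hi
      exact le_max_of_le_left (le_maxVar hi)
  · exact maxVar_le_iff.mpr fun i hi => le_maxVar (by simp [hi])

lemma maxVar_sub_single_le (u : Mono n) (k : Fin n) :
    maxVar (u - Finsupp.single k 1) ≤ maxVar u :=
  maxVar_le_iff.mpr fun _ hi => le_maxVar fun h => hi (by simp [h])

lemma apply_ne_zero_of_maxVar_eq {u : Mono n} {k : Fin n} (h : maxVar u = (k : ℕ) + 1) :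
    u k ≠ 0 := by
  have hne : u.support.Nonempty := by
    rw [Finsupp.support_nonempty_iff]
    rintro rfl
    simp [maxVar] at h
  obtain ⟨i, hi, hsup⟩ := Finset.exists_mem_eq_sup _ hne fun i : Fin n => (i : ℕ) + 1
  obtain rfl : i = k := Fin.ext (by rw [maxVar] at h; omega)
  exact Finsupp.mem_support_iff.mp hi

end Monomials

section MonomialIdeals

variable {I : Ideal (MvPolynomial (Fin n) K)}

lemma monomial_mem_of_le {v w : Mono n} (hv : monomial v (1 : K) ∈ I) (hvw : v ≤ w) :
    monomial w (1 : K) ∈ I := by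
  rw [← tsub_add_cancel_of_le hvw, ← one_mul (1 : K), ← monomial_mul]
  exact I.mul_mem_left _ hv

lemma coeff_eq_zero_of_minGen (hI : MonomialIdeal I) {u v : Mono n} (hu : MinGen I u)
    (hvu : v ≤ u) (hne : v ≠ u) {p : MvPolynomial (Fin n) K} (hp : p ∈ I) : coeff v p = 0 := by
  by_contra hv
  exact hu.2 v hvu hne (hI p hp v (mem_support_iff.mpr hv))

lemma coeff_X_mul_eq_zero_of_minGen (hI : MonomialIdeal I) {u : Mono n} (hu : MinGen I u)
    (k : Fin n) {p : MvPolynomial (Fin n) K} (hp : p ∈ I) : coeff u (X k * p) = 0 := by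
  rw [coeff_X_mul']
  split_ifs with hk
  · refine coeff_eq_zero_of_minGen hI hu tsub_le_self (fun h => ?_) hp
    have := congrArg (· k) h
    simp only [Finsupp.tsub_apply, Finsupp.single_eq_same] at this
    exact Finsupp.mem_support_iff.mp hk (by omega)
  · rfl

lemma SStableIdeal.monomial_sub_single_add_single_mem (hI : SStableIdeal I) {u : Mono n}
    (hu : monomial u (1 : K) ∈ I) {k l : Fin n} (huk : u k ≠ 0) (hlk : l ≤ k) :
    monomial (u - Finsupp.single k 1 + Finsupp.single l 1) (1 : K) ∈ I := by
  rcases hlk.lt_or_eq with hlt | rfl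
  · exact hI.2 u k (Nat.pos_of_ne_zero huk) hu l hlt
  · rwa [sub_single_add_single huk]

lemma exists_le_sub_single_of_lt {u v : Mono n} (hvu : v ≤ u) (hne : v ≠ u) :
    ∃ l, u l ≠ 0 ∧ v ≤ u - Finsupp.single l 1 := by
  obtain ⟨l, hl⟩ : ∃ l, v l < u l := by
    by_contra! h
    exact hne (le_antisymm hvu h)
  refine ⟨l, by omega, fun i => ?_⟩
  rcases eq_or_ne i l with rfl | hil
  · simp only [Finsupp.tsub_apply, Finsupp.single_eq_same]; omega
  · simpa [Finsupp.single_eq_of_ne hil] using hvu i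

/-- Some `u/x_l` lies in `I`; if `l < k`, strong stability trades an `x_k` of it for `x_l`. -/
lemma SStableIdeal.monomial_sub_single_mem_of_not_minGen (hI : SStableIdeal I) {u : Mono n}
    {k : Fin n} (hu : monomial u (1 : K) ∈ I) (hmax : maxVar u = (k : ℕ) + 1)
    (hgen : ¬ MinGen I u) : monomial (u - Finsupp.single k 1) (1 : K) ∈ I := by
  obtain ⟨v, hvu, hne, hv⟩ : ∃ v ≤ u, v ≠ u ∧ monomial v (1 : K) ∈ I := by
    simpa [MinGen, hu] using hgen
  obtain ⟨l, hul, hvl⟩ := exists_le_sub_single_of_lt hvu hne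
  have hdiv : monomial (u - Finsupp.single l 1) (1 : K) ∈ I := monomial_mem_of_le hv hvl
  rcases eq_or_ne l k with rfl | hlk
  · exact hdiv
  have huk := apply_ne_zero_of_maxVar_eq hmax
  have hlt : l < k := by
    have := hmax ▸ le_maxVar hul
    exact lt_of_le_of_ne (Fin.le_def.mpr (by omega)) hlk
  have hswap : u - Finsupp.single l 1 - Finsupp.single k 1 + Finsupp.single l 1 =
      u - Finsupp.single k 1 := by
    ext i
    simp only [Finsupp.add_apply, Finsupp.tsub_apply, Finsupp.single_apply]
    split_ifs <;> grind
  simpa [hswap] using hI.2 _ k (by simp [Finsupp.single_eq_of_ne hlk.symm]; omega) hdiv l hlt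

end MonomialIdeals

section GradedPieces

variable {I : Ideal (MvPolynomial (Fin n) K)}

lemma monomial_mem_hComp {u : Mono n} (hu : monomial u (1 : K) ∈ I) :
    monomial u (1 : K) ∈ hComp I (mdeg u) := by
  rw [hComp, if_pos (Int.natCast_nonneg _), Int.toNat_natCast]
  exact ⟨hu, isHomogeneous_monomial _ rfl⟩

lemma mem_of_mem_hComp {z : ℤ} {p : MvPolynomial (Fin n) K} (hp : p ∈ hComp I z) : p ∈ I := by
  unfold hComp at hp
  split_ifs at hp
  · exact hp.1
  · rw [(Submodule.mem_bot K).mp hp]; exact I.zero_mem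

instance (d : ℕ) : FiniteDimensional K (homogeneousSubmodule (Fin n) K d) :=
  have : Finite {u : Mono n | u.degree = d} := (Finsupp.finite_of_degree_eq d).to_subtype
  Module.Finite.equiv <| .symm <|
    (LinearEquiv.ofEq _ _ (homogeneousSubmodule_eq_finsupp_supported (σ := Fin n) (R := K) d)).trans
      (AddMonoidAlgebra.supportedEquivFinsupp _)

instance (I : Ideal (MvPolynomial (Fin n) K)) (z : ℤ) : FiniteDimensional K (hComp I z) := by
  unfold hComp
  by_cases hz : 0 ≤ z
  · rw [if_pos hz]; infer_instance
  · rw [if_neg hz]; infer_instance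

end GradedPieces

section KoszulDifferential

/-- The Koszul differential of the polynomial ring on families indexed by all sets of variables;
`kosD` is its restriction to the graded pieces of `I` (`coe_kosD_apply`). -/
noncomputable def kosDiff (f : Finset (Fin n) → MvPolynomial (Fin n) K) (T : Finset (Fin n)) :
    MvPolynomial (Fin n) K :=
  ∑ k ∈ Tᶜ, (-1 : K) ^ #{a ∈ T | a < k} • (X k * f (insert k T))

lemma card_filter_lt_insert {T : Finset (Fin n)} {k : Fin n} (hk : k ∉ T) (l : Fin n) :
    #{a ∈ insert k T | a < l} = #{a ∈ T | a < l} + if k < l then 1 else 0 := by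
  rw [filter_insert]
  split_ifs with h
  · rw [card_insert_of_notMem (by simp [hk])]
  · rfl

lemma kosDiff_kosDiff (f : Finset (Fin n) → MvPolynomial (Fin n) K) :
    kosDiff (kosDiff f) = 0 := by
  funext T
  set g : Fin n × Fin n → MvPolynomial (Fin n) K := fun p =>
    ((-1 : K) ^ #{a ∈ T | a < p.1} * (-1 : K) ^ #{a ∈ insert p.1 T | a < p.2}) •
      (X p.1 * X p.2 * f (insert p.2 (insert p.1 T)))
  have hsum : kosDiff (kosDiff f) T = ∑ p ∈ Tᶜ.offDiag, g p := by
    rw [sum_finset_product _ Tᶜ (fun k => (insert k T)ᶜ) (fun p => by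
      simp only [mem_offDiag, mem_compl, mem_insert]; grind)]
    refine sum_congr rfl fun k _ => ?_
    simp only [kosDiff, mul_sum, smul_sum, smul_smul, mul_smul_comm, g, mul_assoc]
  have hanti : ∀ p ∈ Tᶜ.offDiag, g p.swap = - g p := by
    rintro ⟨k, l⟩ hp
    simp only [mem_offDiag, mem_compl] at hp
    obtain ⟨hk, hl, hkl⟩ := hp
    simp only [g, Prod.fst_swap, Prod.snd_swap, card_filter_lt_insert hk, card_filter_lt_insert hl,
      Finset.insert_comm l k, mul_comm (X l) (X k), pow_add, ← neg_smul]
    congr 1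
    rcases lt_or_gt_of_ne hkl with h | h
    · simp [h, h.not_gt]; ring
    · simp [h, h.not_gt]; ring
  rw [hsum, Pi.zero_apply]
  refine sum_involution (fun p _ => p.swap) (fun p hp => by rw [hanti p hp, add_neg_cancel])
    (fun p hp _ => ?_) (fun p hp => by
      simp only [mem_offDiag, Prod.fst_swap, Prod.snd_swap] at hp ⊢; tauto) (fun p _ => p.swap_swap)
  simp only [mem_offDiag] at hp
  exact fun h => hp.2.2 (Prod.ext_iff.mp h).1.symm

lemma coe_kosD_apply (I : Ideal (MvPolynomial (Fin n) K)) (i : ℕ) (j : ℤ)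
    (w : {T : Finset (Fin n) // T.card = i + 1} → hComp I (j - (i + 1)))
    (g : Finset (Fin n) → MvPolynomial (Fin n) K) (hg : ∀ T, (w T : MvPolynomial (Fin n) K) = g T)
    (T : {T : Finset (Fin n) // T.card = i}) :
    (kosD I i j w T : MvPolynomial (Fin n) K) = kosDiff g T := by
  simp only [kosD, LinearMap.pi_apply, LinearMap.sum_apply, LinearMap.smul_apply,
    AddSubmonoidClass.coe_finsetSum, SetLike.val_smul]
  rw [kosDiff, ← sum_attach (T : Finset (Fin n))ᶜ]
  refine sum_congr rfl fun k _ => ?_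
  rw [← hg ⟨insert (k : Fin n) T, _⟩]
  rfl

lemma kosDiff_single_erase (S : Finset (Fin n)) (p : MvPolynomial (Fin n) K) {l : Fin n}
    (hl : l ∈ S) :
    kosDiff (Pi.single S p) (S.erase l) = (-1 : K) ^ #{a ∈ S.erase l | a < l} • (X l * p) := by
  rw [kosDiff, sum_eq_single_of_mem l (by simp), insert_erase hl, Pi.single_eq_same]
  intro k hk hkl
  rw [Pi.single_eq_of_ne, mul_zero, smul_zero]
  intro h
  exact mem_compl.mp hk (mem_erase.mpr ⟨hkl, h ▸ mem_insert_self k _⟩)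

lemma kosDiff_single_eq_zero (S : Finset (Fin n)) (p : MvPolynomial (Fin n) K)
    {T : Finset (Fin n)} (hT : ∀ l ∈ S, T ≠ S.erase l) : kosDiff (Pi.single S p) T = 0 := by
  refine sum_eq_zero fun k hk => ?_
  rw [Pi.single_apply, if_neg, mul_zero, smul_zero]
  rintro rfl
  exact hT k (mem_insert_self k T) (erase_insert (mem_compl.mp hk)).symm

end KoszulDifferential

section KoszulCycles

variable {I : Ideal (MvPolynomial (Fin n) K)}

lemma X_mul_monomial_one (l : Fin n) (v : Mono n) :
    X l * monomial v (1 : K) = monomial (v + Finsupp.single l 1) 1 := by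
  rw [X, monomial_mul, one_mul, add_comm]

lemma kosDiff_single_monomial_mem_hComp (S : Finset (Fin n)) (v : Mono n) {z : ℤ}
    (hv : ∀ l ∈ S, monomial (v + Finsupp.single l 1) (1 : K) ∈ hComp I z) (T : Finset (Fin n)) :
    kosDiff (Pi.single S (monomial v 1)) T ∈ hComp I z := by
  by_cases hT : ∀ l ∈ S, T ≠ S.erase l
  · rw [kosDiff_single_eq_zero S _ hT]
    exact Submodule.zero_mem _
  obtain ⟨l, hl, rfl⟩ : ∃ l ∈ S, T = S.erase l := by simpa using hT
  rw [kosDiff_single_erase S _ hl, X_mul_monomial_one]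
  exact Submodule.smul_mem _ _ (hv l hl)

/-- `∂(x^v ⊗ e_S)`, computed in the Koszul complex of the polynomial ring. -/
noncomputable def boundaryCycle (S : Finset (Fin n)) (v : Mono n) (z : ℤ)
    (hv : ∀ l ∈ S, monomial (v + Finsupp.single l 1) (1 : K) ∈ hComp I z) (i : ℕ) :
    {T : Finset (Fin n) // T.card = i} → hComp I z :=
  fun T => ⟨kosDiff (Pi.single S (monomial v 1)) T, kosDiff_single_monomial_mem_hComp S v hv T⟩

lemma boundaryCycle_mem_bettiKer (S : Finset (Fin n)) (v : Mono n) (j : ℤ) (i : ℕ)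
    (hv : ∀ l ∈ S, monomial (v + Finsupp.single l 1) (1 : K) ∈ hComp I (j - i)) :
    boundaryCycle S v (j - i) hv i ∈ bettiKer I i j := by
  cases i with
  | zero => exact Submodule.mem_top
  | succ i =>
    refine LinearMap.mem_ker.mpr (funext fun Q => Subtype.ext ?_)
    rw [coe_kosD_apply I i j _ (kosDiff (Pi.single S (monomial v 1))) (fun _ => rfl),
      kosDiff_kosDiff]
    rfl

lemma coeff_kosD_eq_zero_of_minGen (hI : MonomialIdeal I) {u : Mono n} (hu : MinGen I u)
    {i : ℕ} {j : ℤ} (w : {T : Finset (Fin n) // T.card = i + 1} → hComp I (j - (i + 1)))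
    (T : {T : Finset (Fin n) // T.card = i}) :
    coeff u (kosD I i j w T : MvPolynomial (Fin n) K) = 0 := by
  let g : Finset (Fin n) → MvPolynomial (Fin n) K := fun T =>
    if h : T.card = i + 1 then w ⟨T, h⟩ else 0
  have hg : ∀ T, g T ∈ I := fun T => by
    unfold g
    split_ifs
    exacts [mem_of_mem_hComp (w _).2, I.zero_mem]
  rw [coe_kosD_apply I i j w g (fun T => by simp [g, T.2]), kosDiff, coeff_sum]
  refine sum_eq_zero fun k _ => ?_
  rw [coeff_smul, coeff_X_mul_eq_zero_of_minGen hI hu k (hg _), smul_zero]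

lemma betti_ne_zero_of_mem_bettiKer {i : ℕ} {j : ℤ}
    {x : {T : Finset (Fin n) // T.card = i} → hComp I (j - i)} (hx : x ∈ bettiKer I i j)
    (hx' : x ∉ LinearMap.range (kosD I i j)) : betti I i j ≠ 0 := by
  have hlt : LinearMap.range (kosD I i j) ⊓ bettiKer I i j < bettiKer I i j :=
    lt_of_le_of_ne inf_le_right fun h => hx' (Submodule.mem_inf.mp (h ▸ hx)).1
  have := Submodule.finrank_lt_finrank_of_lt hlt
  unfold betti
  omega

lemma betti_ne_zero_of_minGen (hI : SStableIdeal I) {u : Mono n} (hu : MinGen I u) {i : ℕ}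
    (hmax : maxVar u = i + 1) : betti I i (i + mdeg u) ≠ 0 := by
  have hin : i < n := by
    have : maxVar u ≤ n := maxVar_le_iff.mpr fun l _ => l.2
    omega
  set k : Fin n := ⟨i, hin⟩
  have huk : u k ≠ 0 := apply_ne_zero_of_maxVar_eq hmax
  have hv : ∀ l ∈ Iic k, monomial (u - Finsupp.single k 1 + Finsupp.single l 1) (1 : K) ∈
      hComp I (i + mdeg u - i) := fun l hl => by
    have hdeg : mdeg (u - Finsupp.single k 1 + Finsupp.single l 1) = mdeg u := by
      rw [mdeg_add, mdeg_single, mdeg_sub_single_add_one huk]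
    rw [add_sub_cancel_left, ← hdeg]
    exact monomial_mem_hComp (hI.monomial_sub_single_add_single_mem hu.1 huk (mem_Iic.mp hl))
  let T : {T : Finset (Fin n) // T.card = i} :=
    ⟨(Iic k).erase k, by rw [card_erase_of_mem (mem_Iic.mpr le_rfl), Fin.card_Iic]; rfl⟩
  have hcoeff : coeff u (boundaryCycle (Iic k) _ _ hv i T : MvPolynomial (Fin n) K) ≠ 0 := by
    change coeff u (kosDiff _ _) ≠ 0
    rw [kosDiff_single_erase _ _ (mem_Iic.mpr le_rfl), X_mul_monomial_one,
      sub_single_add_single huk, coeff_smul, coeff_monomial, if_pos rfl, smul_eq_mul, mul_one]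
    exact pow_ne_zero _ (neg_ne_zero.mpr one_ne_zero)
  refine betti_ne_zero_of_mem_bettiKer (boundaryCycle_mem_bettiKer _ _ _ i hv) ?_
  rintro ⟨w, hw⟩
  exact hcoeff (hw ▸ coeff_kosD_eq_zero_of_minGen hI.1 hu w T)

end KoszulCycles

section Shadows

variable {I : Ideal (MvPolynomial (Fin n) K)}

lemma add_single_mem_Mset {k : Fin n} {j : ℕ} {u : Mono n} (hu : u ∈ MleSet I (k + 1) j) :
    u + Finsupp.single k 1 ∈ Mset I (k + 1) (j + 1) := by
  obtain ⟨hdeg, hmem, hmax⟩ := hu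
  refine ⟨by rw [mdeg_add, mdeg_single, hdeg], monomial_mem_of_le hmem le_self_add, ?_⟩
  rw [maxVar_add_single]
  omega

lemma Mset_subset_image_of_betti_eq_zero (hI : SStableIdeal I) {k : Fin n} {j : ℕ}
    (hb : betti I k (k + (j + 1 : ℕ)) = 0) :
    Mset I (k + 1) (j + 1) ⊆ (· + Finsupp.single k 1) '' MleSet I (k + 1) j := by
  rintro u ⟨hdeg, hmem, hmax⟩
  have huk := apply_ne_zero_of_maxVar_eq hmax
  have hgen : ¬ MinGen I u := fun hgen => betti_ne_zero_of_minGen hI hgen hmax (hdeg ▸ hb)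
  refine ⟨u - Finsupp.single k 1, ⟨?_, hI.monomial_sub_single_mem_of_not_minGen hmem hmax hgen,
    (maxVar_sub_single_le u k).trans hmax.le⟩, sub_single_add_single huk⟩
  have := mdeg_sub_single_add_one huk
  omega

end Shadows

/-- Lemma on shadows of strongly stable ideals, with equality in the
absence of the corresponding Betti number. -/
theorem stmt14 (n : ℕ) (K : Type) [Field K] (I : Ideal (MvPolynomial (Fin n) K))
    (hI : SStableIdeal I) :
    (∀ i j : ℕ, 1 ≤ i → i ≤ n → 0 < j →
        (MleSet I i (j - 1)).ncard ≤ (Mset I i j).ncard) ∧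
    (∀ i j : ℕ, i + 1 ≤ n → 0 < j → betti I i ((i : ℤ) + (j : ℤ)) = 0 →
        (Mset I (i + 1) j).ncard = (MleSet I (i + 1) (j - 1)).ncard) := by
  have hinj (k : Fin n) : (· + Finsupp.single k 1 : Mono n → Mono n).Injective :=
    add_left_injective _
  refine ⟨fun i j hi hin hj => ?_, fun i j hin hj hb => ?_⟩
  · obtain ⟨j, rfl⟩ : ∃ j', j = j' + 1 := ⟨j - 1, by omega⟩
    obtain ⟨k, rfl⟩ : ∃ k : Fin n, (k : ℕ) + 1 = i := ⟨⟨i - 1, by omega⟩, by simp; omega⟩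
    exact Set.ncard_le_ncard_of_injOn _ (fun u hu => add_single_mem_Mset hu) (hinj k).injOn
      ((finite_setOf_mdeg_eq _).subset fun u hu => hu.1)
  · obtain ⟨j, rfl⟩ : ∃ j', j = j' + 1 := ⟨j - 1, by omega⟩
    let k : Fin n := ⟨i, by omega⟩
    have himage : Mset I (k + 1) (j + 1) = (· + Finsupp.single k 1) '' MleSet I (k + 1) j :=
      (Mset_subset_image_of_betti_eq_zero hI hb).antisymm
        (Set.image_subset_iff.mpr fun u hu => add_single_mem_Mset hu)
    rw [Nat.add_sub_cancel]
    exact (congrArg Set.ncard himage).trans (Set.ncard_image_of_injective _ (hinj k))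

end Paper
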